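/- arXiv:1912.05741 — 3 statements merged into one kernel-verified Lean document; each statement's English description precedes it below -/
import Mathlib

section
/- Let p₁, p₂ ∈ 𝒫̃. Then the decision regions 𝒫₁ = {p ∈ 𝒫̃ : D_c(p‖p₂) − D_c(p‖p₁) ≥ 0} and 𝒫₂ = {p ∈ 𝒫̃ : D_c(p‖p₂) − D_c(p‖p₁) < 0} are convex sets. -/
open Finset

/-- The four-letter alphabet 𝒳. -/
abbrev X : Type := Fin 4
/-- Triples over 𝒳 (third-order states). -/
abbrev X3 : Type := X × X × X
/-- Quadruples over 𝒳 (tetranucleotides). -/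
abbrev X4 : Type := X × X × X × X

/-- Append a letter `b` to a triple `a`, giving the 4-tuple `ab`. -/
def appX (a : X3) (b : X) : X4 := (a.1, a.2.1, a.2.2, b)

/-- Prepend a letter `b` to a triple `a`, giving the 4-tuple `ba`. -/
def prepX (b : X) (a : X3) : X4 := (b, a.1, a.2.1, a.2.2)

/-- Third-order marginal `p(a) = ∑_b p(ab)`. -/
noncomputable def marg3 (p : X4 → ℝ) (a : X3) : ℝ := ∑ b : X, p (appX a b)

/-- Conditional probability `p(b|a) = p(ab) / p(a)`. -/
noncomputable def condProb (p : X4 → ℝ) (a : X3) (b : X) : ℝ := p (appX a b) / marg3 p a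

/-- Membership in 𝒫̃: strictly positive probability distribution on 𝒳⁴ satisfying
the consistency condition `∑_b p(ab) = ∑_b p(ba)` for all `a ∈ 𝒳³`. -/
structure MemP (p : X4 → ℝ) : Prop where
  pos : ∀ c : X4, 0 < p c
  sum_one : ∑ c : X4, p c = 1
  consistent : ∀ a : X3, (∑ b : X, p (appX a b)) = ∑ b : X, p (prepX b a)

/-- A probability distribution on 𝒳⁴. -/
def IsDist (p : X4 → ℝ) : Prop := (∀ c : X4, 0 ≤ p c) ∧ ∑ c : X4, p c = 1

/-- Conditional relative entropy `D_c(p‖q) = ∑_{a,b} p(ab) log₂ (p(b|a)/q(b|a))`. -/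
noncomputable def Dc (p q : X4 → ℝ) : ℝ :=
  ∑ a : X3, ∑ b : X, p (appX a b) * Real.logb 2 (condProb p a b / condProb q a b)

/-- Conditional entropy `H_c(p) = -∑_{a,b} p(ab) log₂ p(b|a)`. -/
noncomputable def Hc (p : X4 → ℝ) : ℝ :=
  - ∑ a : X3, ∑ b : X, p (appX a b) * Real.logb 2 (condProb p a b)

/-- Chernoff information
`C(p₁,p₂) = inf { D_c(p‖p₁) : p ∈ 𝒫̃, D_c(p‖p₁) = D_c(p‖p₂) }`. -/
noncomputable def Chernoff (p₁ p₂ : X4 → ℝ) : ℝ :=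
  sInf {x : ℝ | ∃ p : X4 → ℝ, MemP p ∧ Dc p p₁ = Dc p p₂ ∧ x = Dc p p₁}

/-- ℓ₁ distance between distributions on 𝒳⁴. -/
noncomputable def l1dist (p q : X4 → ℝ) : ℝ := ∑ c : X4, |p c - q c|

/-- Cyclic indexing of a length-`L` sequence by an arbitrary natural. -/
def cyc {L : ℕ} (x : Fin L → X) (i : ℕ) : X :=
  if h : 0 < L then x ⟨i % L, Nat.mod_lt i h⟩ else 0

/-- The cyclic empirical fourth-order distribution (type) `p̂_x` of a sequence `x ∈ 𝒳^L`:
`p̂_x(c) = (1/L)·#{i : (x_i,x_{i+1},x_{i+2},x_{i+3}) = c}`, indices mod `L`. -/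
noncomputable def empDist {L : ℕ} (x : Fin L → X) (c : X4) : ℝ :=
  (((Finset.range L).filter
      (fun i => (cyc x i, cyc x (i+1), cyc x (i+2), cyc x (i+3)) = c)).card : ℝ) / L

/-- The stationary third-order Markov law on 𝒳^L:
`P_q^{(L)}(x) = q(x₁x₂x₃)·∏_{i=4}^{L} q(x_i | x_{i-3}x_{i-2}x_{i-1})` (0-indexed here). -/
noncomputable def markovLaw (q : X4 → ℝ) {L : ℕ} (x : Fin L → X) : ℝ :=
  marg3 q (cyc x 0, cyc x 1, cyc x 2) *
    ∏ i ∈ Finset.Ico 3 L,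
      condProb q (cyc x (i-3), cyc x (i-2), cyc x (i-1)) (cyc x i)

/-- The cyclic Markov likelihood
`q̃^{(L)}(x) = q(x₁x₂x₃)·∏_{i=1}^{L} q(x_{i+3} | x_i x_{i+1} x_{i+2})`, indices mod `L`. -/
noncomputable def cyclicLaw (q : X4 → ℝ) {L : ℕ} (x : Fin L → X) : ℝ :=
  marg3 q (cyc x 0, cyc x 1, cyc x 2) *
    ∏ i ∈ Finset.range L,
      condProb q (cyc x i, cyc x (i+1), cyc x (i+2)) (cyc x (i+3))

open scoped Classical in
/-- Probability, under `P_q^{(L)}`, that the type of the sample lies in `F`. -/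
noncomputable def probTypeIn (q : X4 → ℝ) (L : ℕ) (F : Set (X4 → ℝ)) : ℝ :=
  ∑ x : Fin L → X, if empDist x ∈ F then markovLaw q x else 0

/-- Contig length `L_N = ⌈L̄ log₂ N⌉`. -/
noncomputable def LN (Lbar : ℝ) (N : ℕ) : ℕ := ⌈Lbar * Real.logb 2 N⌉₊

open scoped Classical in
/-- Probability of an event `E` for `N` i.i.d. pairs `(Kᵢ, Xᵢ)` where `Kᵢ` is uniform on
`{1,…,M}` and, given `Kᵢ = k`, `Xᵢ ∼ P_{p_k}^{(L)}`. -/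
noncomputable def probEvent (M : ℕ) (p : Fin M → X4 → ℝ) (N L : ℕ)
    (E : (Fin N → Fin M × (Fin L → X)) → Prop) : ℝ :=
  ∑ ω : Fin N → Fin M × (Fin L → X),
    (∏ i, (1 / (M : ℝ)) * markovLaw (p (ω i).1) (ω i).2) * (if E ω then 1 else 0)

/-- Probability of the error event
`ℰ_δ = {∃ i j, K_i ≠ K_j ∧ δ(X_i) = δ(X_j)}` for a decision rule `δ`. -/
noncomputable def errProb (M : ℕ) (p : Fin M → X4 → ℝ) (N L : ℕ)
    (δ : (Fin L → X) → Fin M) : ℝ :=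
  probEvent M p N L (fun ω => ∃ i j, (ω i).1 ≠ (ω j).1 ∧ δ (ω i).2 = δ (ω j).2)

/-- `C_min = min_{k≠ℓ} C(p_k, p_ℓ)`. -/
noncomputable def Cmin (M : ℕ) (p : Fin M → X4 → ℝ) : ℝ :=
  sInf {c : ℝ | ∃ k ℓ : Fin M, k ≠ ℓ ∧ c = Chernoff (p k) (p ℓ)}

/-- Resolvability: some sequence of decision rules has vanishing error probability. -/
def Resolvable (M : ℕ) (p : Fin M → X4 → ℝ) (Lbar : ℝ) : Prop :=
  ∃ δ : (N : ℕ) → (Fin (LN Lbar N) → X) → Fin M,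
    Filter.Tendsto (fun N => errProb M p N (LN Lbar N) (δ N)) Filter.atTop (nhds 0)

noncomputable def Lfun (p₁ p₂ p : X4 → ℝ) : ℝ :=
  ∑ a : X3, ∑ b : X, p (appX a b) *
    (Real.logb 2 (condProb p₁ a b) - Real.logb 2 (condProb p₂ a b))

lemma condProb_pos {p : X4 → ℝ} (hp : MemP p) (a : X3) (b : X) :
    0 < condProb p a b := by
  have hm : 0 < marg3 p a :=
    Finset.sum_pos (fun b _ => hp.pos _) Finset.univ_nonempty
  exact div_pos (hp.pos _) hm

lemma Dc_sub_eq (p₁ p₂ p : X4 → ℝ) (h₁ : MemP p₁) (h₂ : MemP p₂) (hp : MemP p) :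
    Dc p p₂ - Dc p p₁ = Lfun p₁ p₂ p := by
  unfold Dc Lfun
  rw [← Finset.sum_sub_distrib]
  refine Finset.sum_congr rfl fun a _ => ?_
  rw [← Finset.sum_sub_distrib]
  refine Finset.sum_congr rfl fun b _ => ?_
  rw [Real.logb_div (condProb_pos hp a b).ne' (condProb_pos h₂ a b).ne',
      Real.logb_div (condProb_pos hp a b).ne' (condProb_pos h₁ a b).ne']
  ring

lemma memP_convex : Convex ℝ {p : X4 → ℝ | MemP p} := by
  intro p hp q hq s t hs ht hst
  refine ⟨fun c => ?_, ?_, fun a => ?_⟩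
  · rcases eq_or_lt_of_le hs with h | h
    · simp only [Pi.add_apply, Pi.smul_apply, smul_eq_mul, ← h]
      have : t = 1 := by linarith
      simpa [this] using hq.pos c
    · have := hq.pos c
      have := hp.pos c
      simp only [Pi.add_apply, Pi.smul_apply, smul_eq_mul]
      nlinarith
  · simp only [Pi.add_apply, Pi.smul_apply, smul_eq_mul]
    rw [Finset.sum_add_distrib, ← Finset.mul_sum, ← Finset.mul_sum, hp.sum_one, hq.sum_one]
    linarith
  · simp only [Pi.add_apply, Pi.smul_apply, smul_eq_mul]
    rw [Finset.sum_add_distrib, ← Finset.mul_sum, ← Finset.mul_sum,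
        Finset.sum_add_distrib, ← Finset.mul_sum, ← Finset.mul_sum,
        hp.consistent a, hq.consistent a]

lemma Lfun_linear (p₁ p₂ p q : X4 → ℝ) (s t : ℝ) :
    Lfun p₁ p₂ (s • p + t • q) = s * Lfun p₁ p₂ p + t * Lfun p₁ p₂ q := by
  unfold Lfun
  rw [Finset.mul_sum, Finset.mul_sum, ← Finset.sum_add_distrib]
  refine Finset.sum_congr rfl fun a _ => ?_
  rw [Finset.mul_sum, Finset.mul_sum, ← Finset.sum_add_distrib]
  refine Finset.sum_congr rfl fun b _ => ?_
  simp only [Pi.add_apply, Pi.smul_apply, smul_eq_mul]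
  ring

/-- the decision regions
`𝒫₁ = {p ∈ 𝒫̃ : D_c(p‖p₂) − D_c(p‖p₁) ≥ 0}` and
`𝒫₂ = {p ∈ 𝒫̃ : D_c(p‖p₂) − D_c(p‖p₁) < 0}` are convex. -/
theorem decision_regions_convex (p₁ p₂ : X4 → ℝ) (h₁ : MemP p₁) (h₂ : MemP p₂) :
    Convex ℝ {p : X4 → ℝ | MemP p ∧ 0 ≤ Dc p p₂ - Dc p p₁} ∧
    Convex ℝ {p : X4 → ℝ | MemP p ∧ Dc p p₂ - Dc p p₁ < 0} := by
  have key : ∀ p, MemP p → Dc p p₂ - Dc p p₁ = Lfun p₁ p₂ p :=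
    fun p hp => Dc_sub_eq p₁ p₂ p h₁ h₂ hp
  constructor
  · intro p hp q hq s t hs ht hst
    have hm : MemP (s • p + t • q) := memP_convex hp.1 hq.1 hs ht hst
    refine ⟨hm, ?_⟩
    rw [key _ hm, Lfun_linear]
    have hp2 := hp.2; have hq2 := hq.2
    rw [key _ hp.1] at hp2; rw [key _ hq.1] at hq2
    have := mul_nonneg hs hp2
    have := mul_nonneg ht hq2
    linarith
  · intro p hp q hq s t hs ht hst
    have hm : MemP (s • p + t • q) := memP_convex hp.1 hq.1 hs ht hst
    refine ⟨hm, ?_⟩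
    rw [key _ hm, Lfun_linear]
    have hp2 := hp.2; have hq2 := hq.2
    rw [key _ hp.1] at hp2; rw [key _ hq.1] at hq2
    rcases eq_or_lt_of_le hs with h | h
    · have ht1 : t = 1 := by linarith
      simp [← h, ht1, hq2]
    · nlinarith
end

section
/- Let p₁ ≠ p₂ be elements of 𝒫̃, and let 𝒫₁ = {p ∈ 𝒫̃ : D_c(p‖p₂) − D_c(p‖p₁) ≥ 0} and 𝒫₂ = {p ∈ 𝒫̃ : D_c(p‖p₂) − D_c(p‖p₁) < 0}. Then, in the subspace topology of 𝒫̃ ⊆ ℝ^{𝒳⁴}, the closure of 𝒫₁ equals the closure of the interior of 𝒫₁, and the closure of 𝒫₂ equals the closure of the interior of 𝒫₂. -/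
open Finset

section Aux

lemma marg3_pos {p : X4 → ℝ} (hp : MemP p) (a : X3) : 0 < marg3 p a :=
  Finset.sum_pos (fun b _ => hp.pos _) ⟨0, Finset.mem_univ _⟩

lemma sum_condProb {p : X4 → ℝ} (hp : MemP p) (a : X3) : ∑ b : X, condProb p a b = 1 := by
  simp only [condProb]
  rw [← Finset.sum_div, ← marg3, div_self (marg3_pos hp a).ne']

/-- The linear functional φ. -/
noncomputable def phiF (q₁ q₂ : X4 → ℝ) (f : X4 → ℝ) : ℝ :=
  ∑ a : X3, ∑ b : X, f (appX a b) *
    (Real.logb 2 (condProb q₁ a b) - Real.logb 2 (condProb q₂ a b))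

lemma Dc_sub_eq_s10 {p q₁ q₂ : X4 → ℝ} (hp : MemP p) (h1 : MemP q₁) (h2 : MemP q₂) :
    Dc p q₂ - Dc p q₁ = phiF q₁ q₂ p := by
  rw [Dc, Dc, phiF, ← Finset.sum_sub_distrib]
  refine Finset.sum_congr rfl fun a _ => ?_
  rw [← Finset.sum_sub_distrib]
  refine Finset.sum_congr rfl fun b _ => ?_
  rw [Real.logb_div (condProb_pos hp a b).ne' (condProb_pos h2 a b).ne',
    Real.logb_div (condProb_pos hp a b).ne' (condProb_pos h1 a b).ne']
  ring

lemma Dc_self {p : X4 → ℝ} (hp : MemP p) : Dc p p = 0 := by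
  rw [Dc]
  refine Finset.sum_eq_zero fun a _ => Finset.sum_eq_zero fun b _ => ?_
  rw [div_self (condProb_pos hp a b).ne', Real.logb_one, mul_zero]

end Aux

lemma inner_le {p₁ p₂ : X4 → ℝ} (h₁ : MemP p₁) (h₂ : MemP p₂) (a : X3) (b : X) :
    p₁ (appX a b) * Real.log (condProb p₂ a b / condProb p₁ a b)
      ≤ marg3 p₁ a * condProb p₂ a b - p₁ (appX a b) := by
  have hpos := h₁.pos (appX a b)
  have hr : 0 < condProb p₂ a b / condProb p₁ a b :=
    div_pos (condProb_pos h₂ a b) (condProb_pos h₁ a b)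
  have h2 : p₁ (appX a b) * (condProb p₂ a b / condProb p₁ a b - 1)
      = marg3 p₁ a * condProb p₂ a b - p₁ (appX a b) := by
    rw [condProb, condProb]
    have hm1 := (marg3_pos h₁ a).ne'
    have hm2 := (marg3_pos h₂ a).ne'
    have hp := hpos.ne'
    field_simp
  calc p₁ (appX a b) * Real.log (condProb p₂ a b / condProb p₁ a b)
      ≤ p₁ (appX a b) * (condProb p₂ a b / condProb p₁ a b - 1) :=
        mul_le_mul_of_nonneg_left (Real.log_le_sub_one_of_pos hr) hpos.le
    _ = _ := h2

lemma inner_lt {p₁ p₂ : X4 → ℝ} (h₁ : MemP p₁) (h₂ : MemP p₂) (a : X3) (b : X)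
    (hne : condProb p₁ a b ≠ condProb p₂ a b) :
    p₁ (appX a b) * Real.log (condProb p₂ a b / condProb p₁ a b)
      < marg3 p₁ a * condProb p₂ a b - p₁ (appX a b) := by
  have hpos := h₁.pos (appX a b)
  have hr : 0 < condProb p₂ a b / condProb p₁ a b :=
    div_pos (condProb_pos h₂ a b) (condProb_pos h₁ a b)
  have hr1 : condProb p₂ a b / condProb p₁ a b ≠ 1 := by
    intro h
    exact hne (((div_eq_one_iff_eq (condProb_pos h₁ a b).ne').mp h).symm)
  have h2 : p₁ (appX a b) * (condProb p₂ a b / condProb p₁ a b - 1)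
      = marg3 p₁ a * condProb p₂ a b - p₁ (appX a b) := by
    rw [condProb, condProb]
    have hm1 := (marg3_pos h₁ a).ne'
    have hm2 := (marg3_pos h₂ a).ne'
    have hp := hpos.ne'
    field_simp
  calc p₁ (appX a b) * Real.log (condProb p₂ a b / condProb p₁ a b)
      < p₁ (appX a b) * (condProb p₂ a b / condProb p₁ a b - 1) :=
        (mul_lt_mul_iff_right₀ hpos).mpr (Real.log_lt_sub_one_of_pos hr hr1)
    _ = _ := h2

lemma sum_bound_zero {p₁ p₂ : X4 → ℝ} (h₁ : MemP p₁) (h₂ : MemP p₂) (a : X3) :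
    ∑ b : X, (marg3 p₁ a * condProb p₂ a b - p₁ (appX a b)) = 0 := by
  rw [Finset.sum_sub_distrib, ← Finset.mul_sum, sum_condProb h₂ a, mul_one]
  exact sub_self (marg3 p₁ a)

lemma T_flip {p₁ p₂ : X4 → ℝ} (h₁ : MemP p₁) (h₂ : MemP p₂) (a : X3) :
    ∑ b : X, p₁ (appX a b) * Real.log (condProb p₁ a b / condProb p₂ a b)
      = - ∑ b : X, p₁ (appX a b) * Real.log (condProb p₂ a b / condProb p₁ a b) := by
  rw [← Finset.sum_neg_distrib]
  refine Finset.sum_congr rfl fun b _ => ?_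
  rw [Real.log_div (condProb_pos h₁ a b).ne' (condProb_pos h₂ a b).ne',
      Real.log_div (condProb_pos h₂ a b).ne' (condProb_pos h₁ a b).ne']
  ring

lemma T_nonneg {p₁ p₂ : X4 → ℝ} (h₁ : MemP p₁) (h₂ : MemP p₂) (a : X3) :
    0 ≤ ∑ b : X, p₁ (appX a b) * Real.log (condProb p₁ a b / condProb p₂ a b) := by
  have key : ∑ b : X, p₁ (appX a b) * Real.log (condProb p₂ a b / condProb p₁ a b) ≤ 0 := by
    calc ∑ b : X, p₁ (appX a b) * Real.log (condProb p₂ a b / condProb p₁ a b)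
        ≤ ∑ b : X, (marg3 p₁ a * condProb p₂ a b - p₁ (appX a b)) :=
          Finset.sum_le_sum fun b _ => inner_le h₁ h₂ a b
      _ = 0 := sum_bound_zero h₁ h₂ a
  rw [T_flip h₁ h₂ a]
  linarith

lemma T_pos {p₁ p₂ : X4 → ℝ} (h₁ : MemP p₁) (h₂ : MemP p₂) (a : X3) (b₀ : X)
    (hne : condProb p₁ a b₀ ≠ condProb p₂ a b₀) :
    0 < ∑ b : X, p₁ (appX a b) * Real.log (condProb p₁ a b / condProb p₂ a b) := by
  have key : ∑ b : X, p₁ (appX a b) * Real.log (condProb p₂ a b / condProb p₁ a b) < 0 := by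
    calc ∑ b : X, p₁ (appX a b) * Real.log (condProb p₂ a b / condProb p₁ a b)
        < ∑ b : X, (marg3 p₁ a * condProb p₂ a b - p₁ (appX a b)) :=
          Finset.sum_lt_sum (fun b _ => inner_le h₁ h₂ a b)
            ⟨b₀, Finset.mem_univ _, inner_lt h₁ h₂ a b₀ hne⟩
      _ = 0 := sum_bound_zero h₁ h₂ a
  rw [T_flip h₁ h₂ a]
  linarith

lemma gibbs_pos {p₁ p₂ : X4 → ℝ} (h₁ : MemP p₁) (h₂ : MemP p₂) (a₀ : X3) (b₀ : X)
    (hab : condProb p₁ a₀ b₀ ≠ condProb p₂ a₀ b₀) : 0 < Dc p₁ p₂ := by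
  have hDc : Dc p₁ p₂ = (∑ a : X3, ∑ b : X,
      p₁ (appX a b) * Real.log (condProb p₁ a b / condProb p₂ a b)) / Real.log 2 := by
    rw [Dc, Finset.sum_div]
    refine Finset.sum_congr rfl fun a _ => ?_
    rw [Finset.sum_div]
    refine Finset.sum_congr rfl fun b _ => ?_
    rw [Real.logb]
    ring
  rw [hDc]
  exact div_pos (Finset.sum_pos' (fun a _ => T_nonneg h₁ h₂ a)
    ⟨a₀, Finset.mem_univ _, T_pos h₁ h₂ a₀ b₀ hab⟩) (Real.log_pos one_lt_two)

lemma memP_mix {p q : X4 → ℝ} (hp : MemP p) (hq : MemP q) {t : ℝ} (ht0 : 0 < t) (ht1 : t ≤ 1) :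
    MemP (fun c => (1 - t) * p c + t * q c) := by
  refine ⟨fun c => ?_, ?_, fun a => ?_⟩
  · have h1 : 0 ≤ (1 - t) * p c := mul_nonneg (by linarith) (hp.pos c).le
    have h2 : 0 < t * q c := mul_pos ht0 (hq.pos c)
    linarith
  · simp only [Finset.sum_add_distrib, ← Finset.mul_sum, hp.sum_one, hq.sum_one]
    ring
  · simp only [Finset.sum_add_distrib, ← Finset.mul_sum, hp.consistent a, hq.consistent a]

lemma phiF_mix (q₁ q₂ p q : X4 → ℝ) (t : ℝ) :
    phiF q₁ q₂ (fun c => (1 - t) * p c + t * q c)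
      = (1 - t) * phiF q₁ q₂ p + t * phiF q₁ q₂ q := by
  rw [phiF, phiF, phiF, Finset.mul_sum, Finset.mul_sum, ← Finset.sum_add_distrib]
  refine Finset.sum_congr rfl fun a _ => ?_
  rw [Finset.mul_sum, Finset.mul_sum, ← Finset.sum_add_distrib]
  exact Finset.sum_congr rfl fun b _ => by ring

lemma continuous_phiF (q₁ q₂ : X4 → ℝ) : Continuous (phiF q₁ q₂) := by
  unfold phiF
  exact continuous_finset_sum _ fun a _ => continuous_finset_sum _ fun b _ =>
    (continuous_apply (appX a b)).mul continuous_const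

/-- in the subspace topology of `𝒫̃ ⊆ ℝ^{𝒳⁴}`, the closure of each decision
region `𝒫₁`, `𝒫₂` equals the closure of its interior. -/
theorem closure_eq_closure_interior (p₁ p₂ : X4 → ℝ) (h₁ : MemP p₁) (h₂ : MemP p₂)
    (hne : p₁ ≠ p₂) :
    (closure {p : {f : X4 → ℝ // MemP f} | 0 ≤ Dc p.1 p₂ - Dc p.1 p₁} =
      closure (interior {p : {f : X4 → ℝ // MemP f} | 0 ≤ Dc p.1 p₂ - Dc p.1 p₁})) ∧
    (closure {p : {f : X4 → ℝ // MemP f} | Dc p.1 p₂ - Dc p.1 p₁ < 0} =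
      closure (interior {p : {f : X4 → ℝ // MemP f} | Dc p.1 p₂ - Dc p.1 p₁ < 0})) := by
  have hrw : ∀ p : {f : X4 → ℝ // MemP f}, Dc p.1 p₂ - Dc p.1 p₁ = phiF p₁ p₂ p.1 :=
    fun p => Dc_sub_eq_s10 p.2 h₁ h₂
  by_cases hc : ∀ a b, condProb p₁ a b = condProb p₂ a b
  · have hz : ∀ p : {f : X4 → ℝ // MemP f}, phiF p₁ p₂ p.1 = 0 := by
      intro p
      rw [phiF]
      exact Finset.sum_eq_zero fun a _ => Finset.sum_eq_zero fun b _ => by rw [hc a b]; ring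
    constructor
    · have h : {p : {f : X4 → ℝ // MemP f} | 0 ≤ Dc p.1 p₂ - Dc p.1 p₁} = Set.univ := by
        ext p; rw [Set.mem_setOf_eq, hrw p, hz p]; simp
      rw [h, interior_univ]
    · have h : {p : {f : X4 → ℝ // MemP f} | Dc p.1 p₂ - Dc p.1 p₁ < 0} = ∅ := by
        ext p; rw [Set.mem_setOf_eq, hrw p, hz p]; simp
      rw [h, interior_empty]
  · push_neg at hc
    obtain ⟨a₀, b₀, hab⟩ := hc
    have hpos : 0 < phiF p₁ p₂ p₁ := by
      have hh := Dc_sub_eq_s10 h₁ h₁ h₂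
      rw [Dc_self h₁, sub_zero] at hh
      rw [← hh]
      exact gibbs_pos h₁ h₂ a₀ b₀ hab
    have hcont : Continuous fun p : {f : X4 → ℝ // MemP f} => phiF p₁ p₂ p.1 :=
      (continuous_phiF p₁ p₂).comp continuous_subtype_val
    constructor
    · have hS : {p : {f : X4 → ℝ // MemP f} | 0 ≤ Dc p.1 p₂ - Dc p.1 p₁}
          = {p : {f : X4 → ℝ // MemP f} | 0 ≤ phiF p₁ p₂ p.1} := by
        ext p; rw [Set.mem_setOf_eq, Set.mem_setOf_eq, hrw p]
      rw [hS]
      refine le_antisymm ?_ (closure_mono interior_subset)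
      have hUopen : IsOpen {p : {f : X4 → ℝ // MemP f} | 0 < phiF p₁ p₂ p.1} :=
        isOpen_lt continuous_const hcont
      have hUsub : {p : {f : X4 → ℝ // MemP f} | 0 < phiF p₁ p₂ p.1} ⊆
          interior {p : {f : X4 → ℝ // MemP f} | 0 ≤ phiF p₁ p₂ p.1} :=
        interior_maximal (Set.setOf_subset_setOf.mpr fun q => le_of_lt) hUopen
      refine closure_minimal (fun p hp => ?_) isClosed_closure
      have hp' : (0:ℝ) ≤ phiF p₁ p₂ p.1 := hp
      rcases hp'.lt_or_eq with h | h
      · exact subset_closure (hUsub h)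
      · refine closure_mono hUsub ?_
        have ht0 : ∀ n : ℕ, (0:ℝ) < 1 / (n + 1) := fun n => by positivity
        have ht1 : ∀ n : ℕ, (1:ℝ) / (n + 1) ≤ 1 := fun n => by
          have : (0:ℝ) ≤ (n:ℝ) := Nat.cast_nonneg n
          rw [div_le_one (by linarith)]
          linarith
        have hmem : ∀ n : ℕ,
            MemP (fun c => (1 - 1 / ((n:ℝ) + 1)) * p.1 c + (1 / ((n:ℝ) + 1)) * p₁ c) :=
          fun n => memP_mix p.2 h₁ (ht0 n) (ht1 n)
        have hseq : Filter.Tendsto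
            (fun n : ℕ => (⟨_, hmem n⟩ : {f : X4 → ℝ // MemP f})) Filter.atTop (nhds p) := by
          rw [tendsto_subtype_rng, tendsto_pi_nhds]
          intro c
          have htt : Filter.Tendsto (fun n : ℕ => (1:ℝ) / (n + 1)) Filter.atTop (nhds 0) :=
            tendsto_one_div_add_atTop_nhds_zero_nat
          have := (((tendsto_const_nhds : Filter.Tendsto (fun _ : ℕ => (1:ℝ)) Filter.atTop (nhds 1)).sub htt).mul (tendsto_const_nhds :
              Filter.Tendsto (fun _ : ℕ => p.1 c) Filter.atTop (nhds (p.1 c)))).add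
            (htt.mul (tendsto_const_nhds :
              Filter.Tendsto (fun _ : ℕ => p₁ c) Filter.atTop (nhds (p₁ c))))
          simpa using this
        refine mem_closure_of_tendsto hseq (Filter.Eventually.of_forall fun n => ?_)
        show (0:ℝ) < phiF p₁ p₂ _
        rw [phiF_mix, ← h, mul_zero, zero_add]
        exact mul_pos (ht0 n) hpos
    · have hS : {p : {f : X4 → ℝ // MemP f} | Dc p.1 p₂ - Dc p.1 p₁ < 0}
          = {p : {f : X4 → ℝ // MemP f} | phiF p₁ p₂ p.1 < 0} := by
        ext p; rw [Set.mem_setOf_eq, Set.mem_setOf_eq, hrw p]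
      rw [hS, (isOpen_lt hcont continuous_const).interior_eq]
end

section
/- Let p₁ ≠ p₂ be elements of 𝒫̃. Suppose p' ∈ 𝒫̃ satisfies D_c(p'‖p₁) ≥ D_c(p'‖p₂), and that p' minimizes D_c(·‖p₁) over the region {p ∈ 𝒫̃ : D_c(p‖p₁) ≥ D_c(p‖p₂)}, i.e., D_c(p'‖p₁) ≤ D_c(p‖p₁) for every p ∈ 𝒫̃ with D_c(p‖p₁) ≥ D_c(p‖p₂). Then p' lies on the decision boundary: D_c(p'‖p₁) = D_c(p'‖p₂). -/
open Finset

lemma Dc_nonneg {p q : X4 → ℝ} (hp : MemP p) (hq : MemP q) : 0 ≤ Dc p q := by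
  unfold Dc
  apply Finset.sum_nonneg
  intro a _
  have key : ∀ b : X, p (appX a b) * (1 - condProb q a b / condProb p a b)
      ≤ p (appX a b) * Real.log (condProb p a b / condProb q a b) := by
    intro b
    apply mul_le_mul_of_nonneg_left _ (hp.pos _).le
    have h1 : Real.log (condProb q a b / condProb p a b) ≤ condProb q a b / condProb p a b - 1 :=
      Real.log_le_sub_one_of_pos (div_pos (condProb_pos hq a b) (condProb_pos hp a b))
    have h2 : Real.log (condProb p a b / condProb q a b)
        = - Real.log (condProb q a b / condProb p a b) := by
      rw [← Real.log_inv, inv_div]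
    linarith
  have hsum : ∑ b : X, p (appX a b) * (1 - condProb q a b / condProb p a b) = 0 := by
    have he : ∀ b : X, p (appX a b) * (1 - condProb q a b / condProb p a b)
        = p (appX a b) - marg3 p a * condProb q a b := by
      intro b
      have hpa := (marg3_pos hp a).ne'
      have hpb := (hp.pos (appX a b)).ne'
      rw [show condProb p a b = p (appX a b) / marg3 p a from rfl]
      field_simp
    rw [Finset.sum_congr rfl (fun b _ => he b), Finset.sum_sub_distrib,
      ← Finset.mul_sum, sum_condProb hq, mul_one]
    simp [marg3]
  have hlog2 : (0:ℝ) < Real.log 2 := Real.log_pos (by norm_num)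
  have h0 : 0 ≤ ∑ b : X, p (appX a b) * Real.log (condProb p a b / condProb q a b) := by
    calc (0:ℝ) = ∑ b : X, p (appX a b) * (1 - condProb q a b / condProb p a b) := hsum.symm
    _ ≤ _ := Finset.sum_le_sum (fun b _ => key b)
  have heq : ∑ b : X, p (appX a b) * Real.logb 2 (condProb p a b / condProb q a b)
      = (∑ b : X, p (appX a b) * Real.log (condProb p a b / condProb q a b)) / Real.log 2 := by
    rw [Finset.sum_div]
    apply Finset.sum_congr rfl
    intro b _
    rw [Real.logb, mul_div_assoc]
  rw [heq]
  exact div_nonneg h0 hlog2.le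

lemma Dc_sub {p q₁ q₂ : X4 → ℝ} (hp : MemP p) (h1 : MemP q₁) (h2 : MemP q₂) :
    Dc p q₁ - Dc p q₂
      = ∑ a : X3, ∑ b : X, p (appX a b) * Real.logb 2 (condProb q₂ a b / condProb q₁ a b) := by
  unfold Dc
  rw [← Finset.sum_sub_distrib]
  apply Finset.sum_congr rfl; intro a _
  rw [← Finset.sum_sub_distrib]
  apply Finset.sum_congr rfl; intro b _
  rw [← mul_sub]
  congr 1
  have hcp := (condProb_pos hp a b).ne'
  have hc1 := (condProb_pos h1 a b).ne'
  have hc2 := (condProb_pos h2 a b).ne'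
  rw [← Real.logb_div (div_ne_zero hcp hc1) (div_ne_zero hcp hc2)]
  congr 1
  field_simp

lemma log_sum_two {x₁ x₂ s₁ s₂ : ℝ} (hx₁ : 0 < x₁) (hx₂ : 0 < x₂) (hs₁ : 0 < s₁) (hs₂ : 0 < s₂) :
    (x₁ + x₂) * Real.log ((x₁ + x₂) / (s₁ + s₂))
      ≤ x₁ * Real.log (x₁ / s₁) + x₂ * Real.log (x₂ / s₂) := by
  have hx : (0:ℝ) < x₁ + x₂ := by linarith
  have hs : (0:ℝ) < s₁ + s₂ := by linarith
  have k : ∀ x s : ℝ, 0 < x → 0 < s →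
      x * Real.log ((x₁+x₂)/(s₁+s₂)) - x * Real.log (x/s) ≤ s * (x₁+x₂)/(s₁+s₂) - x := by
    intro x s hxp hsp
    have hq : (0:ℝ) < ((x₁+x₂)/(s₁+s₂)) / (x/s) :=
      div_pos (div_pos hx hs) (div_pos hxp hsp)
    have h := Real.log_le_sub_one_of_pos hq
    rw [Real.log_div (div_pos hx hs).ne' (div_pos hxp hsp).ne'] at h
    have h3 := mul_le_mul_of_nonneg_left h hxp.le
    have heq : x * (((x₁+x₂)/(s₁+s₂)) / (x/s) - 1) = s * (x₁+x₂)/(s₁+s₂) - x := by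
      field_simp
    rw [heq] at h3
    linarith [h3, mul_sub x (Real.log ((x₁+x₂)/(s₁+s₂))) (Real.log (x/s))]
  have h1 := k x₁ s₁ hx₁ hs₁
  have h2 := k x₂ s₂ hx₂ hs₂
  have hz : s₁*(x₁+x₂)/(s₁+s₂) + s₂*(x₁+x₂)/(s₁+s₂) = x₁ + x₂ := by
    field_simp
  have hmul : (x₁+x₂) * Real.log ((x₁+x₂)/(s₁+s₂))
      = x₁ * Real.log ((x₁+x₂)/(s₁+s₂)) + x₂ * Real.log ((x₁+x₂)/(s₁+s₂)) := add_mul _ _ _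
  linarith

lemma MemP_mix {p q : X4 → ℝ} (hp : MemP p) (hq : MemP q) {t : ℝ} (h0 : 0 < t) (h1 : t < 1) :
    MemP (fun c => (1 - t) * p c + t * q c) where
  pos c := add_pos (mul_pos (by linarith) (hp.pos c)) (mul_pos h0 (hq.pos c))
  sum_one := by
    rw [Finset.sum_add_distrib, ← Finset.mul_sum, ← Finset.mul_sum, hp.sum_one, hq.sum_one]
    ring
  consistent a := by
    simp only [Finset.sum_add_distrib, ← Finset.mul_sum, hp.consistent a, hq.consistent a]

lemma marg3_mix (p q : X4 → ℝ) (t : ℝ) (a : X3) :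
    marg3 (fun c => (1 - t) * p c + t * q c) a = (1 - t) * marg3 p a + t * marg3 q a := by
  unfold marg3
  rw [Finset.sum_add_distrib, ← Finset.mul_sum, ← Finset.mul_sum]

lemma Dc_mix_le {p q : X4 → ℝ} (hp : MemP p) (hq : MemP q) {t : ℝ} (h0 : 0 < t) (h1 : t < 1) :
    Dc (fun c => (1 - t) * p c + t * q c) q ≤ (1 - t) * Dc p q := by
  have hpt : MemP (fun c => (1 - t) * p c + t * q c) := MemP_mix hp hq h0 h1
  set pt : X4 → ℝ := fun c => (1 - t) * p c + t * q c with hptdef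
  have hlog2 : (0:ℝ) < Real.log 2 := Real.log_pos (by norm_num)
  unfold Dc
  rw [Finset.mul_sum]
  apply Finset.sum_le_sum
  intro a _
  rw [Finset.mul_sum]
  apply Finset.sum_le_sum
  intro b _
  have ht1 : (0:ℝ) < 1 - t := by linarith
  have hcq := condProb_pos hq a b
  have hx₁ : 0 < (1 - t) * p (appX a b) := mul_pos ht1 (hp.pos _)
  have hx₂ : 0 < t * q (appX a b) := mul_pos h0 (hq.pos _)
  have hs₁ : 0 < (1 - t) * marg3 p a * condProb q a b :=
    mul_pos (mul_pos ht1 (marg3_pos hp a)) hcq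
  have hs₂ : 0 < t * marg3 q a * condProb q a b :=
    mul_pos (mul_pos h0 (marg3_pos hq a)) hcq
  have key := log_sum_two hx₁ hx₂ hs₁ hs₂
  -- rewrite the three log arguments
  have e1 : ((1 - t) * p (appX a b) + t * q (appX a b))
      / ((1 - t) * marg3 p a * condProb q a b + t * marg3 q a * condProb q a b)
      = condProb pt a b / condProb q a b := by
    have h1 : condProb pt a b = pt (appX a b) / marg3 pt a := rfl
    rw [h1, marg3_mix, div_div,
      show pt (appX a b) = (1 - t) * p (appX a b) + t * q (appX a b) from rfl]
    congr 1
    ring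
  have e2 : (1 - t) * p (appX a b) / ((1 - t) * marg3 p a * condProb q a b)
      = condProb p a b / condProb q a b := by
    rw [mul_assoc, mul_div_mul_left _ _ ht1.ne',
      show condProb p a b = p (appX a b) / marg3 p a from rfl, div_div]
  have e3 : t * q (appX a b) / (t * marg3 q a * condProb q a b) = 1 := by
    have hm := (marg3_pos hq a).ne'
    have hb := (hq.pos (appX a b)).ne'
    rw [mul_assoc, mul_div_mul_left _ _ h0.ne',
      show condProb q a b = q (appX a b) / marg3 q a from rfl]
    rw [mul_div_cancel₀ _ hm]
    exact div_self hb
  rw [e1, e2, e3, Real.log_one, mul_zero, add_zero] at key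
  have hptab : pt (appX a b) = (1 - t) * p (appX a b) + t * q (appX a b) := rfl
  rw [hptab, Real.logb, Real.logb]
  calc ((1 - t) * p (appX a b) + t * q (appX a b)) *
        (Real.log (condProb pt a b / condProb q a b) / Real.log 2)
      = (((1 - t) * p (appX a b) + t * q (appX a b)) *
        Real.log (condProb pt a b / condProb q a b)) / Real.log 2 := by ring
    _ ≤ ((1 - t) * p (appX a b) * Real.log (condProb p a b / condProb q a b)) / Real.log 2 :=
        (div_le_div_iff_of_pos_right hlog2).mpr key
    _ = (1 - t) * (p (appX a b) * (Real.log (condProb p a b / condProb q a b) / Real.log 2)) := by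
        ring


/-- a minimizer `p'` of `D_c(·‖p₁)` over the region
`{p ∈ 𝒫̃ : D_c(p‖p₁) ≥ D_c(p‖p₂)}` lies on the decision boundary:
`D_c(p'‖p₁) = D_c(p'‖p₂)`. -/
theorem minimizer_on_boundary (p₁ p₂ : X4 → ℝ) (h₁ : MemP p₁) (h₂ : MemP p₂)
    (hne : p₁ ≠ p₂) (p' : X4 → ℝ) (hp' : MemP p')
    (hreg : Dc p' p₂ ≤ Dc p' p₁)
    (hmin : ∀ p : X4 → ℝ, MemP p → Dc p p₂ ≤ Dc p p₁ → Dc p' p₁ ≤ Dc p p₁) :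
    Dc p' p₁ = Dc p' p₂ := by
  by_contra hne'
  have hlt : Dc p' p₂ < Dc p' p₁ := lt_of_le_of_ne hreg (fun h => hne' h.symm)
  have hg'pos : 0 < Dc p' p₁ - Dc p' p₂ := by linarith
  have hDp2 : 0 ≤ Dc p' p₂ := Dc_nonneg hp' h₂
  have hDp1 : 0 < Dc p' p₁ := by linarith
  have hDnneg : 0 ≤ Dc p₁ p₂ := Dc_nonneg h₁ h₂
  rcases eq_or_lt_of_le hDnneg with hD0 | hDpos
  · -- Dc p₁ p₂ = 0 : use p = p₁ in hmin
    have hm := hmin p₁ h₁ (by rw [Dc_self h₁, ← hD0])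
    rw [Dc_self h₁] at hm
    linarith
  · -- Dc p₁ p₂ > 0 : mix toward p₁
    set g' := Dc p' p₁ - Dc p' p₂ with hg'def
    set D := Dc p₁ p₂ with hDdef
    set t := g' / (g' + D) with htdef
    have hgD : 0 < g' + D := by linarith
    have ht0 : 0 < t := div_pos hg'pos hgD
    have ht1 : t < 1 := (div_lt_one hgD).mpr (by linarith)
    set pt : X4 → ℝ := fun c => (1 - t) * p' c + t * p₁ c with hptdef
    have hpt : MemP pt := MemP_mix hp' h₁ ht0 ht1
    -- linearity of the difference
    have hlin : Dc pt p₁ - Dc pt p₂ = (1 - t) * g' + t * (0 - D) := by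
      rw [Dc_sub hpt h₁ h₂]
      have h1 : g' = ∑ a : X3, ∑ b : X,
          p' (appX a b) * Real.logb 2 (condProb p₂ a b / condProb p₁ a b) := by
        rw [hg'def, Dc_sub hp' h₁ h₂]
      have h2 : (0:ℝ) - D = ∑ a : X3, ∑ b : X,
          p₁ (appX a b) * Real.logb 2 (condProb p₂ a b / condProb p₁ a b) := by
        rw [hDdef, ← Dc_self h₁, ← Dc_sub h₁ h₁ h₂]
      rw [h1, h2, Finset.mul_sum, Finset.mul_sum, ← Finset.sum_add_distrib]
      apply Finset.sum_congr rfl; intro a _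
      rw [Finset.mul_sum, Finset.mul_sum, ← Finset.sum_add_distrib]
      apply Finset.sum_congr rfl; intro b _
      show ((1 - t) * p' (appX a b) + t * p₁ (appX a b)) * _ = _
      ring
    have htz : (1 - t) * g' + t * (0 - D) = 0 := by
      rw [htdef]
      field_simp
      ring
    have hregion : Dc pt p₂ ≤ Dc pt p₁ := by linarith [hlin, htz]
    have hm := hmin pt hpt hregion
    have hconv : Dc pt p₁ ≤ (1 - t) * Dc p' p₁ := Dc_mix_le hp' h₁ ht0 ht1
    nlinarith [hm, hconv, mul_pos ht0 hDp1]
end
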